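/- Let ψ : ℝⁿ → ℝ be a C² function whose graph in Euclidean ℝ^{n+1} has constant mean curvature H, where nH = div(∇ψ/√(1+|∇ψ|²)). Then H = 0. -/

import Mathlib

open MeasureTheory Metric
open scoped ENNReal

/-- Divergence of a vector field on Euclidean space: trace of the total derivative. -/
noncomputable def vdiv {n : ℕ} (X : EuclideanSpace ℝ (Fin n) → EuclideanSpace ℝ (Fin n))
    (u : EuclideanSpace ℝ (Fin n)) : ℝ :=
  LinearMap.trace ℝ (EuclideanSpace ℝ (Fin n)) (fderiv ℝ X u).toLinearMap

/-! The field `X = ∇ψ / √(1 + |∇ψ|²)` has norm less than `1` and constant divergence `nH`.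
By the divergence theorem on the cube `[-R, R]ⁿ`, `nH (2R)ⁿ` is the flux of `X` through the `2n`
faces of the cube, each contributing at most `(2R)ⁿ⁻¹` in absolute value. Hence `|H| R ≤ 1` for
every `R > 0`, and `H = 0`. -/

theorem norm_inv_sqrt_one_add_sq_smul_lt_one {E : Type*} [NormedAddCommGroup E]
    [NormedSpace ℝ E] (x : E) : ‖(Real.sqrt (1 + ‖x‖ ^ 2))⁻¹ • x‖ < 1 := by
  have hpos : 0 < Real.sqrt (1 + ‖x‖ ^ 2) := Real.sqrt_pos.2 (by positivity)
  rw [norm_smul, norm_inv, Real.norm_of_nonneg hpos.le, inv_mul_lt_iff₀ hpos, mul_one]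
  calc ‖x‖ = Real.sqrt (‖x‖ ^ 2) := (Real.sqrt_sq (norm_nonneg x)).symm
    _ < Real.sqrt (1 + ‖x‖ ^ 2) := Real.sqrt_lt_sqrt (by positivity) (by linarith)

theorem differentiable_inv_sqrt_one_add_sq_smul {E : Type*} [NormedAddCommGroup E]
    [InnerProductSpace ℝ E] :
    Differentiable ℝ fun x : E => (Real.sqrt (1 + ‖x‖ ^ 2))⁻¹ • x := by
  have hpos (x : E) : 0 < 1 + ‖x‖ ^ 2 := by positivity
  have hsq : Differentiable ℝ fun x : E => 1 + ‖x‖ ^ 2 :=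
    (differentiable_const 1).add ((contDiff_norm_sq ℝ (n := 1)).differentiable one_ne_zero)
  have hsqrt := hsq.sqrt fun x => (hpos x).ne'
  exact (hsqrt.inv fun x => (Real.sqrt_pos.2 (hpos x)).ne').smul differentiable_id

theorem ContDiff.differentiable_gradient {F : Type*} [NormedAddCommGroup F]
    [InnerProductSpace ℝ F] [CompleteSpace F] {ψ : F → ℝ} (hψ : ContDiff ℝ 2 ψ) :
    Differentiable ℝ (gradient ψ) :=
  (InnerProductSpace.toDual ℝ F).symm.differentiable.comp
    ((hψ.fderiv_right (m := 1) le_rfl).differentiable one_ne_zero)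

theorem vdiv_eq_sum {n : ℕ} (X : EuclideanSpace ℝ (Fin n) → EuclideanSpace ℝ (Fin n))
    (u : EuclideanSpace ℝ (Fin n)) :
    vdiv X u = ∑ i, fderiv ℝ X u (EuclideanSpace.single i 1) i := by
  rw [vdiv, LinearMap.trace_eq_matrix_trace ℝ (EuclideanSpace.basisFun (Fin n) ℝ).toBasis,
    Matrix.trace]
  simp [LinearMap.toMatrix_apply]

theorem Real.volume_real_Icc_neg_const_pi {ι : Type*} [Fintype ι] {R : ℝ} (hR : 0 ≤ R) :
    volume.real (Set.Icc (fun _ : ι => -R) fun _ => R) = (2 * R) ^ Fintype.card ι := by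
  rw [measureReal_def, Real.volume_Icc_pi_toReal fun _ => by linarith]
  simp only [sub_neg_eq_add, Finset.prod_const, Finset.card_univ]
  ring

theorem abs_mul_le_of_divergence_eq_of_norm_le {n : ℕ}
    {f : (Fin (n + 1) → ℝ) → Fin (n + 1) → ℝ}
    {f' : (Fin (n + 1) → ℝ) → (Fin (n + 1) → ℝ) →L[ℝ] Fin (n + 1) → ℝ} {c M R : ℝ}
    (hf : ∀ x, HasFDerivAt f (f' x) x) (hdiv : ∀ x, ∑ i, f' x (Pi.single i 1) i = c)
    (hM : ∀ x i, ‖f x i‖ ≤ M) (hR : 0 < R) : |c| * R ≤ (n + 1) * M := by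
  set a : Fin (n + 1) → ℝ := fun _ => -R
  set b : Fin (n + 1) → ℝ := fun _ => R
  have hab : a ≤ b := fun _ => neg_le_self hR.le
  have hface (i : Fin (n + 1)) (y : ℝ) :
      |∫ x in Set.Icc (a ∘ i.succAbove) (b ∘ i.succAbove), f (i.insertNth y x) i| ≤
        M * (2 * R) ^ n := by
    have h := norm_setIntegral_le_of_norm_le_const (μ := volume) isCompact_Icc.measure_lt_top
      fun x (_ : x ∈ Set.Icc (a ∘ i.succAbove) (b ∘ i.succAbove)) => hM (i.insertNth y x) i
    rwa [Real.norm_eq_abs, Function.comp_def, Function.comp_def,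
      Real.volume_real_Icc_neg_const_pi hR.le, Fintype.card_fin] at h
  have hconst : (fun x => ∑ i, f' x (Pi.single i 1) i) = fun _ => c := funext hdiv
  have hflux := integral_divergence_of_hasFDerivAt_off_countable a b hab f f' ∅
    Set.countable_empty (continuous_iff_continuousAt.2 fun x => (hf x).continuousAt).continuousOn
    (fun x _ => hf x) (hconst ▸ integrableOn_const isCompact_Icc.measure_lt_top.ne)
  rw [hconst, setIntegral_const, Real.volume_real_Icc_neg_const_pi hR.le, Fintype.card_fin,
    smul_eq_mul] at hflux
  have hpos : 0 < 2 * (2 * R) ^ n := by positivity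
  refine le_of_mul_le_mul_right ?_ hpos
  calc |c| * R * (2 * (2 * R) ^ n) = |(2 * R) ^ (n + 1) * c| := by
        rw [abs_mul, abs_of_pos (by positivity : 0 < (2 * R) ^ (n + 1))]; ring
    _ ≤ ∑ i : Fin (n + 1), (M * (2 * R) ^ n + M * (2 * R) ^ n) := by
        rw [hflux]
        exact (Finset.abs_sum_le_sum_abs _ _).trans <| Finset.sum_le_sum fun i _ =>
          (abs_sub _ _).trans (add_le_add (hface i _) (hface i _))
    _ = (n + 1) * M * (2 * (2 * R) ^ n) := by
        rw [Finset.sum_const, Finset.card_univ, Fintype.card_fin, nsmul_eq_mul]; push_cast; ring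

theorem abs_mul_le_of_vdiv_eq_of_norm_le {n : ℕ}
    {X : EuclideanSpace ℝ (Fin n) → EuclideanSpace ℝ (Fin n)}
    {c M R : ℝ} (hX : Differentiable ℝ X) (hdiv : ∀ u, vdiv X u = c) (hM : ∀ u, ‖X u‖ ≤ M)
    (hR : 0 < R) : |c| * R ≤ n * M := by
  cases n with
  | zero =>
    have hc : c = 0 := by rw [← hdiv 0, vdiv_eq_sum, Finset.univ_eq_empty, Finset.sum_empty]
    simp [hc]
  | succ n =>
    let e := PiLp.continuousLinearEquiv 2 ℝ fun _ : Fin (n + 1) => ℝ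
    push_cast
    refine abs_mul_le_of_divergence_eq_of_norm_le (f := fun x => e (X (e.symm x)))
      (fun x => e.hasFDerivAt.comp x <| (hX _).hasFDerivAt.comp x e.symm.hasFDerivAt)
      (fun x => ?_) (fun x i => (PiLp.norm_apply_le _ i).trans (hM _)) hR
    rw [← hdiv (e.symm x), vdiv_eq_sum]
    rfl

theorem eq_zero_of_vdiv_eq_of_norm_le {n : ℕ}
    {X : EuclideanSpace ℝ (Fin n) → EuclideanSpace ℝ (Fin n)} {c M : ℝ} (hX : Differentiable ℝ X)
    (hdiv : ∀ u, vdiv X u = c) (hM : ∀ u, ‖X u‖ ≤ M) : c = 0 := by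
  by_contra hc
  have hc' : 0 < |c| := abs_pos.2 hc
  have h := abs_mul_le_of_vdiv_eq_of_norm_le hX hdiv hM (R := (|n * M| + 1) / |c|)
    (by positivity)
  rw [mul_div_cancel₀ _ hc'.ne'] at h
  linarith [le_abs_self ((n : ℝ) * M)]

/-- Vanishing theorem for entire CMC graphs in Euclidean space (Heinz, Chern, Flanders). -/
theorem cmc_vanishing_euclidean (n : ℕ) (hn : 0 < n) (H : ℝ)
    (ψ : EuclideanSpace ℝ (Fin n) → ℝ) (hψ : ContDiff ℝ 2 ψ)
    (hmean : ∀ u, (n : ℝ) * H =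
      vdiv (fun v => (Real.sqrt (1 + ‖gradient ψ v‖ ^ 2))⁻¹ • gradient ψ v) u) :
    H = 0 := by
  have hX : Differentiable ℝ fun v => (Real.sqrt (1 + ‖gradient ψ v‖ ^ 2))⁻¹ • gradient ψ v :=
    differentiable_inv_sqrt_one_add_sq_smul.comp hψ.differentiable_gradient
  have hnH : (n : ℝ) * H = 0 := eq_zero_of_vdiv_eq_of_norm_le hX (fun u => (hmean u).symm)
    fun v => (norm_inv_sqrt_one_add_sq_smul_lt_one _).le
  exact (mul_eq_zero.1 hnH).resolve_left (Nat.cast_ne_zero.2 hn.ne')
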